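/- The determining series of the (p,q)-Hermite polynomials, F_{p,q}(t) = ∑_{m=0}^{∞} (−1)^m p^{m(m−1)} t^{2m}/[2m]_{p,q}!!, satisfies the identity D_{p,q} F_{p,q}(t) = −t · F_{p,q}(pt) in ℝ⟦t⟧, where F_{p,q}(pt) = ∑_{m=0}^{∞} (−1)^m p^{m(m−1)} p^{2m} t^{2m}/[2m]_{p,q}!!. -/

import Mathlib

noncomputable section
open Finset Polynomial

/-- The (p,q)-number `[n]_{p,q} = (p^n - q^n)/(p - q)`. -/
def pqNum (p q : ℝ) (n : ℕ) : ℝ := (p ^ n - q ^ n) / (p - q)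

/-- The (p,q)-factorial `[n]_{p,q}! = ∏_{k=1}^n [k]_{p,q}`. -/
def pqFact (p q : ℝ) (n : ℕ) : ℝ := ∏ k ∈ Finset.Icc 1 n, pqNum p q k

/-- The (p,q)-binomial coefficient. -/
def pqBinom (p q : ℝ) (n k : ℕ) : ℝ := pqFact p q n / (pqFact p q k * pqFact p q (n - k))

/-- The (p,q)-derivative on polynomials: the linear operator with `D(X^n) = [n]_{p,q} X^(n-1)`. -/
def pqDeriv (p q : ℝ) (f : Polynomial ℝ) : Polynomial ℝ :=
  f.sum fun n a => Polynomial.C (a * pqNum p q n) * Polynomial.X ^ (n - 1)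

/-- The (p,q)-derivative on formal power series, acting coefficientwise by
`D(X^n) = [n]_{p,q} X^(n-1)`. -/
def pqDerivPS (p q : ℝ) (f : PowerSeries ℝ) : PowerSeries ℝ :=
  PowerSeries.mk fun n => pqNum p q (n + 1) * PowerSeries.coeff (n + 1) f

/-- The double (p,q)-factorial `[2m]_{p,q}!! = ∏_{k=1}^m [2k]_{p,q}`. -/
def pqDoubleFact (p q : ℝ) (m : ℕ) : ℝ := ∏ k ∈ Finset.Icc 1 m, pqNum p q (2 * k)

/-- A sequence of real polynomials of exact degree `n` is (p,q)-Appell when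
`D_{p,q} f_{n+1}(x) = [n+1]_{p,q} f_n(p x)` for all `n ≥ 0` and all `x`. -/
def IsPQAppell (p q : ℝ) (f : ℕ → Polynomial ℝ) : Prop :=
  (∀ n, (f n).natDegree = n) ∧
    ∀ (n : ℕ) (x : ℝ), (pqDeriv p q (f (n + 1))).eval x = pqNum p q (n + 1) * (f n).eval (p * x)

/-!
The determining series is even, `F = ∑ c_m t^{2m}`, and `D_{p,q}` lowers `t^{2m+2}` to
`[2m+2]_{p,q} t^{2m+1}`, so the identity is the coefficient recurrence
`[2m+2]_{p,q} c_{m+1} = -p^{2m} c_m`. It holds because `[2m+2]_{p,q}!! = [2m]_{p,q}!! [2m+2]_{p,q}`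
and `(m+1)m = m(m-1) + 2m`; positivity of `[n]_{p,q}` for `0 < q < p` makes the division exact.
-/

lemma pqNum_pos {p q : ℝ} (hq : 0 < q) (hpq : q < p) {n : ℕ} (hn : n ≠ 0) : 0 < pqNum p q n :=
  div_pos (sub_pos.mpr (pow_lt_pow_left₀ hpq hq.le hn)) (sub_pos.mpr hpq)

lemma pqDoubleFact_succ (p q : ℝ) (m : ℕ) :
    pqDoubleFact p q (m + 1) = pqDoubleFact p q m * pqNum p q (2 * (m + 1)) :=
  Finset.prod_Icc_succ_top (by omega) _

def evenSeries (a : ℕ → ℝ) : PowerSeries ℝ :=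
  PowerSeries.mk fun n => if Even n then a (n / 2) else 0

lemma pqDerivPS_evenSeries (p q : ℝ) (a : ℕ → ℝ) :
    pqDerivPS p q (evenSeries a) =
      PowerSeries.X * evenSeries fun m => pqNum p q (2 * (m + 1)) * a (m + 1) := by
  ext n
  rcases n with _ | k
  · simp [pqDerivPS, evenSeries]
  · rw [PowerSeries.coeff_succ_X_mul]
    simp only [pqDerivPS, evenSeries, PowerSeries.coeff_mk, Nat.even_add_one, not_not]
    split_ifs with hk
    · obtain ⟨m, rfl⟩ := hk
      rw [show (m + m + 1 + 1) / 2 = m + 1 by omega, show (m + m) / 2 = m by omega,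
        show m + m + 1 + 1 = 2 * (m + 1) by ring]
    · rw [mul_zero]

lemma succ_mul_pred_eq (m : ℕ) : (m + 1) * (m + 1 - 1) = m * (m - 1) + 2 * m := by
  cases m with
  | zero => rfl
  | succ m => rw [Nat.add_sub_cancel, Nat.add_sub_cancel]; ring

lemma pqHermiteCoeff_succ {p q : ℝ} {m : ℕ} (h : pqNum p q (2 * (m + 1)) ≠ 0) :
    pqNum p q (2 * (m + 1)) *
        ((-1 : ℝ) ^ (m + 1) * p ^ ((m + 1) * (m + 1 - 1)) / pqDoubleFact p q (m + 1)) =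
      -((-1 : ℝ) ^ m * p ^ (m * (m - 1)) * p ^ (2 * m) / pqDoubleFact p q m) := by
  rw [pqDoubleFact_succ, mul_comm (pqDoubleFact p q m), ← div_div, mul_div_assoc',
    mul_div_cancel₀ _ h, succ_mul_pred_eq, pow_add]
  ring

/-- the determining series of the (p,q)-Hermite polynomials satisfies
D F(t) = -t F(pt) in the formal power series ring. -/
theorem pq_hermite_determining_series (p q : ℝ) (hq : 0 < q) (hpq : q < p) :
    pqDerivPS p q
        (PowerSeries.mk fun n =>
          if Even n then (-1 : ℝ) ^ (n / 2) * p ^ ((n / 2) * (n / 2 - 1)) / pqDoubleFact p q (n / 2)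
          else 0)
      = -(PowerSeries.X *
          PowerSeries.mk fun n =>
            if Even n then
              (-1 : ℝ) ^ (n / 2) * p ^ ((n / 2) * (n / 2 - 1)) * p ^ n / pqDoubleFact p q (n / 2)
            else 0) := by
  have hF : (PowerSeries.mk fun n =>
      if Even n then (-1 : ℝ) ^ (n / 2) * p ^ ((n / 2) * (n / 2 - 1)) / pqDoubleFact p q (n / 2)
      else 0) = evenSeries fun m => (-1 : ℝ) ^ m * p ^ (m * (m - 1)) / pqDoubleFact p q m := rfl
  have hFp : (PowerSeries.mk fun n =>
      if Even n then
        (-1 : ℝ) ^ (n / 2) * p ^ ((n / 2) * (n / 2 - 1)) * p ^ n / pqDoubleFact p q (n / 2)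
      else 0) =
      evenSeries fun m => (-1 : ℝ) ^ m * p ^ (m * (m - 1)) * p ^ (2 * m) / pqDoubleFact p q m := by
    ext n
    simp only [evenSeries, PowerSeries.coeff_mk]
    split_ifs with hn
    · rw [Nat.two_mul_div_two_of_even hn]
    · rfl
  rw [hF, hFp, pqDerivPS_evenSeries, ← mul_neg]
  congr 1
  ext n
  simp only [evenSeries, PowerSeries.coeff_mk, map_neg]
  split_ifs
  · exact pqHermiteCoeff_succ (pqNum_pos hq hpq (by omega)).ne'
  · exact neg_zero.symm
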